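/- Sunflower lemma: any family of more than d!·k^d distinct sets, each of size at most d, contains a (k+1)-sunflower, i.e., k+1 sets whose pairwise intersections all equal a common set. -/

import Mathlib

/-!
Erdős–Rado, by induction on `d`. Take a maximal pairwise disjoint subfamily `T ⊆ 𝒜`; if it has
more than `k` members it is a sunflower with empty core. Otherwise every member of `𝒜` meets (or
equals) one of the at most `k` members of `T`, so some `B ∈ T` is met by more than `(d+1)! k^d`
members of `𝒜`, and then some `x ∈ B` lies in more than `d! k^d` of them. Removing `x` from
those sets gives a family of `d`-sets, whose sunflower lifts back by adding `x` to every petal.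
-/

open Finset
open scoped Nat

theorem Finset.exists_lt_card_of_subset_biUnion {α ι : Type*} [DecidableEq α] {s : Finset α}
    {I : Finset ι} {F : ι → Finset α} {n : ℕ} (hs : s ⊆ I.biUnion F) (hn : #I * n < #s) :
    ∃ i ∈ I, n < #(F i) :=
  exists_lt_of_sum_lt <| calc
    ∑ _ ∈ I, n = #I * n := by rw [sum_const, smul_eq_mul]
    _ < #s := hn
    _ ≤ #(I.biUnion F) := card_le_card hs
    _ ≤ ∑ i ∈ I, #(F i) := card_biUnion_le

section

variable {V : Type*} [DecidableEq V]

def IsSunflower (S : Finset (Finset V)) (C : Finset V) : Prop :=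
  ∀ A ∈ S, ∀ B ∈ S, A ≠ B → A ∩ B = C

def HasSunflower (𝒜 : Finset (Finset V)) (t : ℕ) : Prop :=
  ∃ S ⊆ 𝒜, ∃ C : Finset V, #S = t ∧ IsSunflower S C

theorem hasSunflower_of_pairwiseDisjoint {𝒜 T : Finset (Finset V)} {t : ℕ} (hT𝒜 : T ⊆ 𝒜)
    (hT : (T : Set (Finset V)).PairwiseDisjoint id) (ht : t ≤ #T) : HasSunflower 𝒜 t := by
  obtain ⟨S, hST, rfl⟩ := exists_subset_card_eq ht
  exact ⟨S, hST.trans hT𝒜, ∅, rfl, fun A hA B hB hAB =>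
    disjoint_iff_inter_eq_empty.mp (hT (hST hA) (hST hB) hAB)⟩

theorem HasSunflower.of_memberSubfamily {𝒜 : Finset (Finset V)} {x : V} {t : ℕ}
    (h : HasSunflower (𝒜.memberSubfamily x) t) : HasSunflower 𝒜 t := by
  obtain ⟨S, hS, C, rfl, hSC⟩ := h
  have hxS : ∀ A ∈ S, x ∉ A := fun A hA => (mem_memberSubfamily.mp (hS hA)).2
  have hinj : Set.InjOn (insert x) (S : Set (Finset V)) := fun A hA B hB hAB => by
    rw [← erase_insert (hxS A hA), ← erase_insert (hxS B hB), hAB]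
  refine ⟨S.image (insert x), ?_, insert x C, card_image_of_injOn hinj, ?_⟩
  · intro _ hA'
    obtain ⟨A, hA, rfl⟩ := mem_image.mp hA'
    exact (mem_memberSubfamily.mp (hS hA)).1
  · intro _ hA' _ hB' hAB
    obtain ⟨A, hA, rfl⟩ := mem_image.mp hA'
    obtain ⟨B, hB, rfl⟩ := mem_image.mp hB'
    rw [← insert_inter_distrib, hSC A hA B hB (ne_of_apply_ne _ hAB)]

theorem card_memberSubfamily (𝒜 : Finset (Finset V)) (x : V) :
    #(𝒜.memberSubfamily x) = #{A ∈ 𝒜 | x ∈ A} :=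
  card_image_of_injOn fun _ hA _ hB hAB =>
    erase_injOn' x (mem_filter.mp hA).2 (mem_filter.mp hB).2 hAB

theorem exists_maximal_pairwiseDisjoint_subfamily (𝒜 : Finset (Finset V)) :
    ∃ T ⊆ 𝒜, (T : Set (Finset V)).PairwiseDisjoint id ∧
      ∀ A ∈ 𝒜, ∃ B ∈ T, A = B ∨ ¬Disjoint A B := by
  classical
  obtain ⟨T, hT, hTmax⟩ := Finset.exists_maximal (s := 𝒜.powerset.filter
    fun T : Finset (Finset V) => (T : Set (Finset V)).PairwiseDisjoint id) ⟨∅, by simp⟩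
  obtain ⟨hT𝒜, hTdisj⟩ := mem_filter.mp hT
  refine ⟨T, mem_powerset.mp hT𝒜, hTdisj, fun A hA => ?_⟩
  by_contra! h
  have hins : insert A T ⊆ T := by
    refine hTmax (mem_filter.mpr ⟨mem_powerset.mpr (insert_subset hA (mem_powerset.mp hT𝒜)), ?_⟩)
      (subset_insert A T)
    rw [coe_insert]
    exact hTdisj.insert fun B hB _ => (h B hB).2
  exact (h A (hins (mem_insert_self A T))).1 rfl

theorem exists_lt_card_filter_mem {𝒜 T : Finset (Finset V)} {s m : ℕ} (hsm : 0 < s * m)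
    (hcover : ∀ A ∈ 𝒜, ∃ B ∈ T, A = B ∨ ¬Disjoint A B) (hT : ∀ B ∈ T, #B ≤ s)
    (hcard : #T * (s * m) < #𝒜) : ∃ x, m < #{A ∈ 𝒜 | x ∈ A} := by
  have h𝒜 : 𝒜 ⊆ T.biUnion fun B => {A ∈ 𝒜 | A = B ∨ ¬Disjoint A B} := fun A hA => by
    obtain ⟨B, hB, hAB⟩ := hcover A hA
    exact mem_biUnion.mpr ⟨B, hB, mem_filter.mpr ⟨hA, hAB⟩⟩
  obtain ⟨B, hBT, hB⟩ := exists_lt_card_of_subset_biUnion h𝒜 hcard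
  have hBne : B.Nonempty := by
    rw [nonempty_iff_ne_empty]
    rintro rfl
    have : #{A ∈ 𝒜 | A = ∅ ∨ ¬Disjoint A ∅} ≤ 1 := card_le_one.mpr fun _ hA _ hB => by
      simp only [mem_filter, disjoint_empty_right, not_true_eq_false, or_false] at hA hB
      rw [hA.2, hB.2]
    omega
  have hstar : {A ∈ 𝒜 | A = B ∨ ¬Disjoint A B} ⊆ B.biUnion fun x => {A ∈ 𝒜 | x ∈ A} := by
    intro A hA
    obtain ⟨hA, hAB⟩ := mem_filter.mp hA
    obtain ⟨y, hyA, hyB⟩ : ∃ y ∈ A, y ∈ B := by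
      rcases hAB with rfl | hAB
      exacts [let ⟨y, hy⟩ := hBne; ⟨y, hy, hy⟩, not_disjoint_iff.mp hAB]
    exact mem_biUnion.mpr ⟨y, hyB, mem_filter.mpr ⟨hA, hyA⟩⟩
  obtain ⟨x, -, hx⟩ :=
    exists_lt_card_of_subset_biUnion hstar ((Nat.mul_le_mul_right m (hT B hBT)).trans_lt hB)
  exact ⟨x, hx⟩

theorem hasSunflower_of_card_lt (k : ℕ) : ∀ (d : ℕ) (𝒜 : Finset (Finset V)),
    (∀ A ∈ 𝒜, #A ≤ d) → d ! * k ^ d < #𝒜 → HasSunflower 𝒜 (k + 1)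
  | 0, 𝒜, hsize, hcard => by
    have : #𝒜 ≤ 1 := card_le_one.mpr fun A hA B hB => by
      rw [card_eq_zero.mp (Nat.le_zero.mp (hsize A hA)),
        card_eq_zero.mp (Nat.le_zero.mp (hsize B hB))]
    simp only [Nat.factorial_zero, pow_zero, mul_one] at hcard
    omega
  | d + 1, 𝒜, hsize, hcard => by
    obtain ⟨T, hT𝒜, hTdisj, hTcover⟩ := exists_maximal_pairwiseDisjoint_subfamily 𝒜
    by_cases hbig : k + 1 ≤ #T
    · exact hasSunflower_of_pairwiseDisjoint hT𝒜 hTdisj hbig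
    have hk : 0 < k := by
      obtain ⟨A, hA⟩ : 𝒜.Nonempty := card_pos.mp (by omega)
      obtain ⟨B, hB, -⟩ := hTcover A hA
      have := card_pos.mpr ⟨B, hB⟩
      omega
    obtain ⟨x, hx⟩ := exists_lt_card_filter_mem (by positivity) hTcover
      (fun B hB => hsize B (hT𝒜 hB)) <| calc
        #T * ((d + 1) * (d ! * k ^ d)) ≤ k * ((d + 1) * (d ! * k ^ d)) := by gcongr; omega
        _ = (d + 1)! * k ^ (d + 1) := by rw [Nat.factorial_succ]; ring
        _ < #𝒜 := hcard
    refine HasSunflower.of_memberSubfamily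
      (hasSunflower_of_card_lt k d _ (fun A hA => ?_) (card_memberSubfamily 𝒜 x ▸ hx))
    obtain ⟨hA, hxA⟩ := mem_memberSubfamily.mp hA
    have := hsize _ hA
    rw [card_insert_of_notMem hxA] at this
    omega

end

/-- Sunflower lemma: any family of more than `d! * k^d` distinct sets, each of size
at most `d`, contains a `(k+1)`-sunflower: `k+1` sets whose pairwise intersections
all equal a common set. -/
theorem stmt10 {V : Type*} [DecidableEq V] (d k : ℕ) (𝒜 : Finset (Finset V))
    (hsize : ∀ A ∈ 𝒜, A.card ≤ d)
    (hcard : Nat.factorial d * k ^ d < 𝒜.card) :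
    ∃ S ⊆ 𝒜, ∃ C : Finset V, S.card = k + 1 ∧
      ∀ A ∈ S, ∀ B ∈ S, A ≠ B → A ∩ B = C :=
  hasSunflower_of_card_lt k d 𝒜 hsize hcard
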